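/- Every separable Banach space B embeds as a dense subspace of a separable Hilbert space H via a continuous linear injection (Kuelbs embedding): there exist a separable Hilbert space H and a continuous injective linear map j : B → H with norm at most 1 and dense range. -/

import Mathlib

/-!
Kuelbs' construction. Take a dense sequence `(uₙ)` in `B` and functionals `fₙ` of norm at most one
with `fₙ uₙ = ‖uₙ‖`. They separate points: if every `fₙ` kills `x`, then
`‖uₙ‖ = fₙ (uₙ - x) ≤ ‖uₙ - x‖`, so `‖x‖ ≤ 2 ‖x - uₙ‖` for all `n`, and density gives `x = 0`.
After rescaling by square-summable weights, `x ↦ (gₙ x)ₙ` is an injective map `B → ℓ²` of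
norm at most one; `H` is the closure of its range.
-/

open TopologicalSpace
open scoped lp

section

variable {𝕜 E : Type*} [RCLike 𝕜] [NormedAddCommGroup E] [NormedSpace 𝕜 E]

theorem exists_seq_strongDual_norm_le_one_separating [SeparableSpace E] :
    ∃ f : ℕ → StrongDual 𝕜 E, (∀ n, ‖f n‖ ≤ 1) ∧ ∀ x, (∀ n, f n x = 0) → x = 0 := by
  have : Nonempty E := ⟨0⟩
  let u := denseSeq E
  choose f hf_norm hf_apply using fun n => exists_dual_vector'' 𝕜 (u n)
  refine ⟨f, hf_norm, fun x hx => norm_le_zero_iff.1 ?_⟩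
  have key (n : ℕ) : ‖x‖ ≤ 2 * ‖x - u n‖ := by
    have : ‖u n‖ ≤ ‖x - u n‖ :=
      calc ‖u n‖ = ‖f n (u n - x)‖ := by simp [hx n, hf_apply n]
        _ ≤ 1 * ‖u n - x‖ := (f n).le_of_opNorm_le (hf_norm n) _
        _ = ‖x - u n‖ := by rw [one_mul, norm_sub_rev]
    linarith [norm_le_insert' x (u n)]
  have hclosed : IsClosed {y | ‖x‖ ≤ 2 * ‖x - y‖} :=
    isClosed_le continuous_const (by fun_prop)
  simpa using (denseRange_denseSeq E).induction_on (p := fun y => ‖x‖ ≤ 2 * ‖x - y‖) x hclosed key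

theorem exists_seq_strongDual_summable_sq_separating [SeparableSpace E] :
    ∃ g : ℕ → StrongDual 𝕜 E, Summable (fun n => ‖g n‖ ^ 2) ∧ ∑' n, ‖g n‖ ^ 2 ≤ 1 ∧
      ∀ x, (∀ n, g n x = 0) → x = 0 := by
  obtain ⟨f, hf_norm, hf_sep⟩ := exists_seq_strongDual_norm_le_one_separating (𝕜 := 𝕜) (E := E)
  let w : ℕ → ℝ := fun n => 1 / 2 / 2 ^ n
  have hw_pos (n : ℕ) : 0 < w n := by positivity
  have hw_le_one (n : ℕ) : w n ≤ 1 := by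
    rw [div_le_one (by positivity)]
    linarith [one_le_pow₀ (M₀ := ℝ) one_le_two (n := n)]
  have hg_le (n : ℕ) : ‖(w n : 𝕜) • f n‖ ^ 2 ≤ w n := by
    have : ‖(w n : 𝕜) • f n‖ ≤ w n := by
      rw [norm_smul, RCLike.norm_ofReal, abs_of_pos (hw_pos n)]
      exact mul_le_of_le_one_right (hw_pos n).le (hf_norm n)
    calc ‖(w n : 𝕜) • f n‖ ^ 2 ≤ w n ^ 2 := by gcongr
      _ ≤ w n := pow_le_of_le_one (hw_pos n).le (hw_le_one n) two_ne_zero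
  have hsum : Summable fun n => ‖(w n : 𝕜) • f n‖ ^ 2 :=
    (summable_geometric_two' 1).of_nonneg_of_le (fun _ => by positivity) hg_le
  refine ⟨fun n => (w n : 𝕜) • f n, hsum, ?_, fun x hx => hf_sep x fun n => ?_⟩
  · calc ∑' n, ‖(w n : 𝕜) • f n‖ ^ 2 ≤ ∑' n, w n :=
          hsum.tsum_le_tsum hg_le (summable_geometric_two' 1)
      _ = 1 := tsum_geometric_two' 1
  · simpa [(hw_pos n).ne'] using hx n

namespace StrongDual

variable {ι : Type*} (g : ι → StrongDual 𝕜 E)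

theorem summable_norm_apply_sq (hg : Summable fun i => ‖g i‖ ^ 2) (x : E) :
    Summable fun i => ‖g i x‖ ^ 2 :=
  (hg.mul_right (‖x‖ ^ 2)).of_nonneg_of_le (fun _ => by positivity) fun i => by
    rw [← mul_pow]; gcongr; exact (g i).le_opNorm x

theorem tsum_norm_apply_sq_le (hg : Summable fun i => ‖g i‖ ^ 2) (x : E) :
    ∑' i, ‖g i x‖ ^ 2 ≤ (∑' i, ‖g i‖ ^ 2) * ‖x‖ ^ 2 := by
  rw [← tsum_mul_right]
  exact (summable_norm_apply_sq g hg x).tsum_le_tsum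
    (fun i => by rw [← mul_pow]; gcongr; exact (g i).le_opNorm x) (hg.mul_right _)

noncomputable def toL2 (hg : Summable fun i => ‖g i‖ ^ 2) : E →L[𝕜] ℓ²(ι, 𝕜) :=
  LinearMap.mkContinuous
    { toFun := fun x =>
        ⟨fun i => g i x, memℓp_gen (by simpa using summable_norm_apply_sq g hg x)⟩
      map_add' := fun x y => by ext i; exact map_add (g i) x y
      map_smul' := fun c x => by ext i; simp }
    √(∑' i, ‖g i‖ ^ 2) fun x => by
      refine lp.norm_le_of_tsum_le (by norm_num) (by positivity) ?_
      simp only [LinearMap.coe_mk, AddHom.coe_mk, ENNReal.toReal_ofNat, Real.rpow_two, mul_pow,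
        Real.sq_sqrt (tsum_nonneg fun i => sq_nonneg ‖g i‖)]
      exact tsum_norm_apply_sq_le g hg x

@[simp]
theorem toL2_apply (hg : Summable fun i => ‖g i‖ ^ 2) (x : E) (i : ι) :
    toL2 g hg x i = g i x :=
  rfl

theorem norm_toL2_le (hg : Summable fun i => ‖g i‖ ^ 2) :
    ‖toL2 g hg‖ ≤ √(∑' i, ‖g i‖ ^ 2) :=
  LinearMap.mkContinuous_norm_le _ (by positivity) _

theorem toL2_injective (hg : Summable fun i => ‖g i‖ ^ 2)
    (hsep : ∀ x, (∀ i, g i x = 0) → x = 0) : Function.Injective (toL2 g hg) :=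
  (injective_iff_map_eq_zero _).2 fun x hx => hsep x fun i => by
    simpa using congrArg (fun y : ℓ²(ι, 𝕜) => y i) hx

end StrongDual

theorem ContinuousLinearMap.denseRange_codRestrict_topologicalClosure_range
    {F : Type*} [NormedAddCommGroup F] [NormedSpace 𝕜 F] (T : E →L[𝕜] F) :
    DenseRange (T.codRestrict (LinearMap.range (T : E →ₗ[𝕜] F)).topologicalClosure
      fun x => Submodule.le_topologicalClosure _ ⟨x, rfl⟩) := by
  refine Subtype.dense_iff.2 ?_
  rw [← Set.range_comp]
  exact (LinearMap.range (T : E →ₗ[𝕜] F)).topologicalClosure_coe.subset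

end

theorem stmt2_general (B : Type*) [NormedAddCommGroup B] [NormedSpace ℝ B]
    [SeparableSpace B] :
    ∃ (H : Type) (_ : NormedAddCommGroup H) (_ : InnerProductSpace ℝ H),
      CompleteSpace H ∧ SeparableSpace H ∧
      ∃ j : B →L[ℝ] H, Function.Injective j ∧ ‖j‖ ≤ 1 ∧ DenseRange j := by
  obtain ⟨g, hg, hg_le, hsep⟩ := exists_seq_strongDual_summable_sq_separating (𝕜 := ℝ) (E := B)
  let T := StrongDual.toL2 g hg
  let H := (LinearMap.range (T : B →ₗ[ℝ] ℓ²(ℕ, ℝ))).topologicalClosure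
  let j := T.codRestrict H fun x => Submodule.le_topologicalClosure _ ⟨x, rfl⟩
  have hj_dense : DenseRange j := T.denseRange_codRestrict_topologicalClosure_range
  have hj_inj : Function.Injective j := fun x y hxy =>
    StrongDual.toL2_injective g hg hsep (congrArg Subtype.val hxy)
  have hj_norm : ‖j‖ ≤ 1 :=
    calc ‖j‖ ≤ ‖T‖ := j.opNorm_le_bound (norm_nonneg _) T.le_opNorm
      _ ≤ √(∑' n, ‖g n‖ ^ 2) := StrongDual.norm_toL2_le g hg
      _ ≤ 1 := Real.sqrt_le_one.2 hg_le
  exact ⟨H, inferInstance, inferInstance, inferInstance, hj_dense.separableSpace j.continuous,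
    j, hj_inj, hj_norm, hj_dense⟩

/-- Kuelbs embedding: every separable real Banach space embeds as a dense subspace of a
separable Hilbert space via a continuous injective linear map of norm at most one. -/
theorem stmt2 (B : Type*) [NormedAddCommGroup B] [NormedSpace ℝ B] [CompleteSpace B]
    [SeparableSpace B] :
    ∃ (H : Type) (_ : NormedAddCommGroup H) (_ : InnerProductSpace ℝ H),
      CompleteSpace H ∧ SeparableSpace H ∧
      ∃ j : B →L[ℝ] H, Function.Injective j ∧ ‖j‖ ≤ 1 ∧ DenseRange j :=
  stmt2_general B
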